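/- Consider the composite problem minimize φ = f + g under the standing assumptions, and let x^{k+1} = prox_{γ_{k+1} g}(x^k − γ_{k+1}∇f(x^k)) for strictly positive stepsizes γ_k. Then for every k ≥ 1, every x* ∈ argmin φ, every ε_{k+1} > 0 and every θ_{k+1} ≥ 0, with ρ_{k+1} = γ_{k+1}/γ_k and P_k = φ(x^k) − min φ: ½‖x^{k+1} − x*‖² + γ_{k+1}(1 + θ_{k+1})P_k + ((1 − ε_{k+1}ρ_{k+1})/2)‖x^k − x^{k+1}‖² ≤ ½‖x^k − x*‖² + θ_{k+1}γ_{k+1}P_{k-1} + ρ_{k+1}( (1 − γ_kℓ_k(2 − γ_kc_k))/(2ε_{k+1}) − θ_{k+1}(1 − γ_kℓ_k) ) ‖x^{k-1} − x^k‖². -/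

import Mathlib

open scoped RealInnerProductSpace
open Filter

noncomputable section

/-- Euclidean space `ℝⁿ`. -/
abbrev En (n : ℕ) := EuclideanSpace ℝ (Fin n)

/-- Local Lipschitz-type estimate `ℓ = ⟨∇f(a) − ∇f(b), a − b⟩ / ‖a − b‖²`
(Lean's division by zero implements the `0/0 = 0` convention). -/
noncomputable def lEst {n : ℕ} (f' : En n → En n) (a b : En n) : ℝ :=
  ⟪f' a - f' b, a - b⟫ / ‖a - b‖ ^ 2

/-- Local (inverse) cocoercivity estimate `c = ‖∇f(a) − ∇f(b)‖² / ⟨∇f(a) − ∇f(b), a − b⟩`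
(convention `0/0 = 0`). -/
noncomputable def cEst {n : ℕ} (f' : En n → En n) (a b : En n) : ℝ :=
  ‖f' a - f' b‖ ^ 2 / ⟪f' a - f' b, a - b⟫

/-- `δ = γ ℓ (γ c − 1)`. -/
noncomputable def deltaEst {n : ℕ} (γ : ℝ) (f' : En n → En n) (a b : En n) : ℝ :=
  γ * lEst f' a b * (γ * cEst f' a b - 1)

/-- `g` is proper, lower semicontinuous and convex (extended-real-valued). -/
def ProperLscConvex {n : ℕ} (g : En n → EReal) : Prop :=
  (∀ x, g x ≠ ⊥) ∧ (∃ x, g x ≠ ⊤) ∧ LowerSemicontinuous g ∧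
    ∀ x y : En n, ∀ a b : ℝ, 0 ≤ a → 0 ≤ b → a + b = 1 →
      g (a • x + b • y) ≤ (a : EReal) * g x + (b : EReal) * g y

/-- `p = prox_{γ g}(u)`, characterized as minimality of `w ↦ g w + ‖w − u‖²/(2γ)`. -/
def IsProx {n : ℕ} (γ : ℝ) (g : En n → EReal) (u p : En n) : Prop :=
  ∀ w, g p + ((‖p - u‖ ^ 2 / (2 * γ) : ℝ) : EReal) ≤ g w + ((‖w - u‖ ^ 2 / (2 * γ) : ℝ) : EReal)

/-- Real value of `φ = f + g` (equals `f z + g z` whenever `g z` is finite). -/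
noncomputable def phiR {n : ℕ} (f : En n → ℝ) (g : En n → EReal) (z : En n) : ℝ :=
  f z + (g z).toReal

/-- `P = φ(z) − φ(x*)` (real-valued). -/
noncomputable def Pval {n : ℕ} (f : En n → ℝ) (g : En n → EReal) (xs z : En n) : ℝ :=
  phiR f g z - phiR f g xs

/-- adaPGM stepsize factor: `min{√(1+ρ), 1/(2√([δ]₊))}` with the convention `1/0 = +∞`
(so the second term is inactive when `[δ]₊ = 0`). -/
noncomputable def adaStep (ρ δ : ℝ) : ℝ :=
  if δ ≤ 0 then Real.sqrt (1 + ρ) else min (Real.sqrt (1 + ρ)) (1 / (2 * Real.sqrt δ))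

/-- Malitsky–Mishchenko stepsize: `min{γ√(1+γ/γ'), 1/(2L)}` with the convention `1/0 = +∞`. -/
noncomputable def mmStep (γprev γ L : ℝ) : ℝ :=
  if L = 0 then γ * Real.sqrt (1 + γ / γprev)
  else min (γ * Real.sqrt (1 + γ / γprev)) (1 / (2 * L))

/-- Lyapunov function `U_k = ½‖x^k − x*‖² + ¼‖x^k − x^{k-1}‖² + γ_k(1+ρ_k)P_{k-1}`,
with the Lean index shifted by one (Lean `x (k+1)` is the paper `x^k`). -/
noncomputable def Ufun {n : ℕ} (f : En n → ℝ) (g : En n → EReal) (xs : En n)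
    (x : ℕ → En n) (γ : ℕ → ℝ) (k : ℕ) : ℝ :=
  1/2 * ‖x (k+1) - xs‖ ^ 2 + 1/4 * ‖x (k+1) - x k‖ ^ 2
    + γ (k+1) * (1 + γ (k+1) / γ k) * Pval f g xs (x k)

/-!
Write `y, z, w` for `x^{k-1}, x^k, x^{k+1}`. The prox steps make `(z - w)/γ_{k+1} - ∇f(z)` a
subgradient of `g` at `w` and `(y - z)/γ_k - ∇f(y)` one at `z`; together with the gradient
inequality of `f` at `z` they give the three-point inequality
`½‖w - x*‖² + ½‖z - w‖² + γ_{k+1} P_k ≤ ½‖z - x*‖² + γ_{k+1}⟪q, z - w⟫` with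
`q = (y - z)/γ_k - (∇f(y) - ∇f(z))`. Young's inequality with weight `ε/γ_k` bounds the last term,
and `‖q‖² = (1 - γ_kℓ_k(2 - γ_kc_k))/γ_k² ‖y - z‖²` by the definitions of `ℓ_k, c_k`. The
`θ`-terms come from the sufficient decrease `P_k + (1 - γ_kℓ_k)/γ_k ‖y - z‖² ≤ P_{k-1}`,
obtained from the same subgradient at `z` tested against `y`.
-/

section Gradient

variable {E : Type*} [NormedAddCommGroup E] [InnerProductSpace ℝ E] [CompleteSpace E]
  {f : E → ℝ} {gy gz y z : E}

theorem ConvexOn.add_inner_le_of_hasGradientAt (hf : ConvexOn ℝ Set.univ f)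
    (hz : HasGradientAt f gz z) (u : E) : f z + ⟪gz, u - z⟫ ≤ f u := by
  have hline : HasDerivAt (f ∘ AffineMap.lineMap (k := ℝ) z u) ⟪gz, u - z⟫ 0 := by
    have := hz.hasFDerivAt.comp_hasDerivAt_of_eq (0 : ℝ)
      (AffineMap.hasDerivAt_lineMap (a := z) (b := u)) (by simp)
    simpa only [InnerProductSpace.toDual_apply_apply] using this
  have := (hf.comp_affineMap (AffineMap.lineMap (k := ℝ) z u)).le_slope_of_hasDerivAt
    (Set.mem_univ 0) (Set.mem_univ 1) zero_lt_one hline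
  simp only [slope_def_field, Function.comp_apply, AffineMap.lineMap_apply_one,
    AffineMap.lineMap_apply_zero, sub_zero, div_one] at this
  linarith

theorem ConvexOn.hasGradientAt_eq_of_inner_sub_nonpos (hf : ConvexOn ℝ Set.univ f)
    (hy : HasGradientAt f gy y) (hz : HasGradientAt f gz z) (h : ⟪gy - gz, y - z⟫ ≤ 0) :
    gy = gz := by
  -- `z` minimizes `u ↦ f u - ⟪gy, u⟫`, whose gradient at `z` is `gz - gy`
  have hmin : IsMinOn (fun u => f u - ⟪gy, u⟫) Set.univ z := by
    intro u _
    show f z - ⟪gy, z⟫ ≤ f u - ⟪gy, u⟫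
    have hyz := hf.add_inner_le_of_hasGradientAt hz y
    have hzy := hf.add_inner_le_of_hasGradientAt hy z
    have hyu := hf.add_inner_le_of_hasGradientAt hy u
    simp only [inner_sub_left, inner_sub_right] at h hyz hzy hyu
    linarith
  have hderiv : HasFDerivAt (fun u => f u - ⟪gy, u⟫)
      (InnerProductSpace.toDual ℝ E (gz - gy)) z := by
    rw [map_sub]
    exact hz.hasFDerivAt.sub (InnerProductSpace.toDual ℝ E gy).hasFDerivAt
  have := (hmin.isLocalMin Filter.univ_mem).hasFDerivAt_eq_zero hderiv
  rw [LinearIsometryEquiv.map_eq_zero_iff, sub_eq_zero] at this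
  exact this.symm

end Gradient

theorem real_inner_le_div_add_mul {E : Type*} [NormedAddCommGroup E] [InnerProductSpace ℝ E]
    (a b : E) {t : ℝ} (ht : 0 < t) : ⟪a, b⟫ ≤ ‖a‖ ^ 2 / (2 * t) + t / 2 * ‖b‖ ^ 2 := by
  have h := sq_nonneg ‖a - t • b‖
  rw [norm_sub_sq_real, norm_smul, real_inner_smul_right, Real.norm_of_nonneg ht.le] at h
  field_simp
  linarith

theorem le_of_forall_mem_Ioc_le_add_mul {a b c : ℝ}
    (h : ∀ t ∈ Set.Ioc (0 : ℝ) 1, a ≤ b + t * c) : a ≤ b := by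
  have hlim : Tendsto (fun t : ℝ => b + t * c) (nhdsWithin 0 (Set.Ioi 0)) (nhds b) := by
    have : Continuous (fun t : ℝ => b + t * c) := by fun_prop
    simpa using (this.tendsto 0).mono_left nhdsWithin_le_nhds
  refine ge_of_tendsto hlim ?_
  filter_upwards [Ioc_mem_nhdsGT (zero_lt_one' ℝ)] using h

theorem EReal.ne_top_of_coe_add_le {a b : ℝ} {s t : EReal} (h : (a : EReal) + s ≤ b + t)
    (ht : t ≠ ⊤) : s ≠ ⊤ := by
  intro hs
  rw [hs, EReal.coe_add_top, top_le_iff] at h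
  exact EReal.add_ne_top (EReal.coe_ne_top b) ht h

theorem inner_sub_eq_lEst_mul {n : ℕ} (f' : En n → En n) (a b : En n) :
    ⟪f' a - f' b, a - b⟫ = lEst f' a b * ‖a - b‖ ^ 2 := by
  rcases eq_or_ne a b with rfl | hab
  · simp
  · rw [lEst, div_mul_cancel₀ _ (by simpa [sub_eq_zero] using hab)]

section ProximalGradient

variable {n : ℕ} {f : En n → ℝ} {f' : En n → En n} {g : En n → EReal}

theorem norm_sub_sq_eq_lEst_mul_cEst_mul {a b : En n}
    (h : ⟪f' a - f' b, a - b⟫ = 0 → f' a = f' b) :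
    ‖f' a - f' b‖ ^ 2 = lEst f' a b * cEst f' a b * ‖a - b‖ ^ 2 := by
  by_cases hab : ⟪f' a - f' b, a - b⟫ = 0
  · simp [lEst, cEst, h hab]
  · have hne : ‖a - b‖ ≠ 0 := fun h0 => hab (by rw [norm_eq_zero.1 h0, inner_zero_right])
    rw [lEst, cEst]
    field_simp

theorem norm_inv_smul_sub_sub_sq {y z : En n}
    (hmono : ⟪f' y - f' z, y - z⟫ = 0 → f' y = f' z) {γ : ℝ} (hγ : γ ≠ 0) :
    ‖γ⁻¹ • (y - z) - (f' y - f' z)‖ ^ 2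
      = (1 - γ * lEst f' y z * (2 - γ * cEst f' y z)) / γ ^ 2 * ‖y - z‖ ^ 2 := by
  rw [norm_sub_sq_real, norm_smul, real_inner_smul_left, real_inner_comm,
    inner_sub_eq_lEst_mul, norm_sub_sq_eq_lEst_mul_cEst_mul hmono, Real.norm_eq_abs,
    mul_pow, sq_abs]
  field_simp
  ring

def ConvexEReal (g : En n → EReal) : Prop :=
  ∀ x y : En n, ∀ a b : ℝ, 0 ≤ a → 0 ≤ b → a + b = 1 →
    g (a • x + b • y) ≤ (a : EReal) * g x + (b : EReal) * g y

theorem IsProx.ne_top {γ : ℝ} {v p : En n} (hp : IsProx γ g v p) (hg : ∃ w, g w ≠ ⊤) :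
    g p ≠ ⊤ := by
  obtain ⟨w, hw⟩ := hg
  intro htop
  have := hp w
  rw [htop, EReal.top_add_coe, top_le_iff] at this
  exact EReal.add_ne_top hw (EReal.coe_ne_top _) this

theorem IsProx.add_inner_le (hg : ConvexEReal g) {γ : ℝ} (hγ : 0 < γ) {v p u : En n}
    (hp : IsProx γ g v p) {Gp Gu : ℝ} (hGp : g p = Gp) (hGu : g u = Gu) :
    Gp + ⟪v - p, u - p⟫ / γ ≤ Gu := by
  -- compare `p` with `p + t • (u - p)` in the prox objective and let `t → 0⁺`
  refine le_of_forall_mem_Ioc_le_add_mul (c := ‖u - p‖ ^ 2 / (2 * γ)) fun t ht => ?_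
  have hconvex : g (p + t • (u - p)) ≤ (((1 - t) * Gp + t * Gu : ℝ) : EReal) := by
    have := hg p u (1 - t) t (by linarith [ht.2]) ht.1.le (by ring)
    rwa [hGp, hGu, ← EReal.coe_mul, ← EReal.coe_mul, ← EReal.coe_add,
      show (1 - t) • p + t • u = p + t • (u - p) by module] at this
  have hmin : Gp + ‖p - v‖ ^ 2 / (2 * γ)
      ≤ (1 - t) * Gp + t * Gu + ‖p + t • (u - p) - v‖ ^ 2 / (2 * γ) := by
    have := (hp (p + t • (u - p))).trans (add_le_add_left hconvex _)
    rwa [hGp, ← EReal.coe_add, ← EReal.coe_add, EReal.coe_le_coe_iff] at this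
  have hexpand : ‖p + t • (u - p) - v‖ ^ 2
      = ‖p - v‖ ^ 2 - 2 * t * ⟪v - p, u - p⟫ + t ^ 2 * ‖u - p‖ ^ 2 := by
    rw [show p + t • (u - p) - v = t • (u - p) - (v - p) by module, norm_sub_sq_real,
      norm_smul, real_inner_smul_left, real_inner_comm, Real.norm_of_nonneg ht.1.le,
      norm_sub_rev p v]
    ring
  rw [hexpand] at hmin
  have key : t * (Gp + ⟪v - p, u - p⟫ / γ) ≤ t * (Gu + t * (‖u - p‖ ^ 2 / (2 * γ))) := by
    field_simp at hmin ⊢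
    nlinarith
  exact le_of_mul_le_mul_left key ht.1

theorem IsProx.add_inner_le_of_forward (hg : ConvexEReal g) {γ : ℝ} (hγ : 0 < γ)
    {x d p u : En n} (hp : IsProx γ g (x - γ • d) p) {Gp Gu : ℝ}
    (hGp : g p = Gp) (hGu : g u = Gu) :
    Gp + ⟪γ⁻¹ • (x - p) - d, u - p⟫ ≤ Gu := by
  have h := hp.add_inner_le hg hγ hGp hGu
  rwa [div_eq_inv_mul, ← real_inner_smul_left, smul_sub (γ⁻¹) (x - γ • d),
    smul_sub, inv_smul_smul₀ hγ.ne', sub_right_comm, ← smul_sub] at h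

theorem prox_grad_three_point (hconv : ConvexOn ℝ Set.univ f)
    (hgrad : ∀ z, HasGradientAt f (f' z) z) (hg : ConvexEReal g)
    {γ₀ γ₁ : ℝ} (hγ₀ : 0 < γ₀) (hγ₁ : 0 < γ₁) {y z w u : En n}
    (hz : IsProx γ₀ g (y - γ₀ • f' y) z) (hw : IsProx γ₁ g (z - γ₁ • f' z) w)
    {Gz Gw Gu : ℝ} (hGz : g z = Gz) (hGw : g w = Gw) (hGu : g u = Gu) :
    1/2 * ‖w - u‖ ^ 2 + 1/2 * ‖z - w‖ ^ 2 + γ₁ * (f z + Gz - (f u + Gu))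
      ≤ 1/2 * ‖z - u‖ ^ 2 + γ₁ * ⟪γ₀⁻¹ • (y - z) - (f' y - f' z), z - w⟫ := by
  have hwu := hw.add_inner_le_of_forward hg hγ₁ hGw hGu
  have hzw := hz.add_inner_le_of_forward hg hγ₀ hGz hGw
  have hfu := hconv.add_inner_le_of_hasGradientAt (hgrad z) u
  have hpolar : ‖z - u‖ ^ 2 = ‖z - w‖ ^ 2 + 2 * ⟪z - w, w - u⟫ + ‖w - u‖ ^ 2 := by
    rw [← norm_add_sq_real, sub_add_sub_cancel]
  have hfz : ⟪f' z, u - w⟫ = ⟪f' z, u - z⟫ + ⟪f' z, z - w⟫ := by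
    rw [← inner_add_right, sub_add_sub_cancel]
  have hzwu : ⟪z - w, u - w⟫ = -⟪z - w, w - u⟫ := by
    rw [← inner_neg_right, neg_sub]
  rw [← neg_sub z w, inner_neg_right] at hzw
  rw [inner_sub_left, real_inner_smul_left] at hwu hzw
  rw [inner_sub_left, real_inner_smul_left, inner_sub_left (f' y)]
  rw [hfz, hzwu] at hwu
  have hcancel : γ₁ * γ₁⁻¹ = 1 := mul_inv_cancel₀ hγ₁.ne'
  linear_combination γ₁ * hwu + γ₁ * hzw + γ₁ * hfu - 1/2 * hpolar
    + ⟪z - w, w - u⟫ * hcancel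

theorem prox_grad_sufficient_decrease (hconv : ConvexOn ℝ Set.univ f)
    (hgrad : ∀ z, HasGradientAt f (f' z) z) (hg : ConvexEReal g)
    {γ : ℝ} (hγ : 0 < γ) {y z : En n} (hz : IsProx γ g (y - γ • f' y) z)
    {Gy Gz : ℝ} (hGy : g y = Gy) (hGz : g z = Gz) :
    f z + Gz + (1 - γ * lEst f' y z) / γ * ‖y - z‖ ^ 2 ≤ f y + Gy := by
  have hzy := hz.add_inner_le_of_forward hg hγ hGz hGy
  have hfy := hconv.add_inner_le_of_hasGradientAt (hgrad z) y
  rw [inner_sub_left, real_inner_smul_left, real_inner_self_eq_norm_sq] at hzy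
  have hℓ := inner_sub_eq_lEst_mul f' y z
  rw [inner_sub_left] at hℓ
  have hid : (1 - γ * lEst f' y z) / γ * ‖y - z‖ ^ 2
      = γ⁻¹ * ‖y - z‖ ^ 2 - lEst f' y z * ‖y - z‖ ^ 2 := by
    field_simp
  linarith

theorem prox_grad_descent (hconv : ConvexOn ℝ Set.univ f)
    (hgrad : ∀ z, HasGradientAt f (f' z) z) (hg : ConvexEReal g)
    {γ₀ γ₁ ε : ℝ} (hγ₀ : 0 < γ₀) (hγ₁ : 0 < γ₁) (hε : 0 < ε) {y z w u : En n}
    (hz : IsProx γ₀ g (y - γ₀ • f' y) z) (hw : IsProx γ₁ g (z - γ₁ • f' z) w)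
    {Gz Gw Gu : ℝ} (hGz : g z = Gz) (hGw : g w = Gw) (hGu : g u = Gu) :
    1/2 * ‖w - u‖ ^ 2 + (1 - ε * (γ₁ / γ₀)) / 2 * ‖z - w‖ ^ 2 + γ₁ * (f z + Gz - (f u + Gu))
      ≤ 1/2 * ‖z - u‖ ^ 2
        + γ₁ / γ₀ * ((1 - γ₀ * lEst f' y z * (2 - γ₀ * cEst f' y z)) / (2 * ε))
          * ‖y - z‖ ^ 2 := by
  have hthree := prox_grad_three_point hconv hgrad hg hγ₀ hγ₁ hz hw hGz hGw hGu
  have hyoung := real_inner_le_div_add_mul (γ₀⁻¹ • (y - z) - (f' y - f' z)) (z - w)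
    (div_pos hε hγ₀)
  rw [norm_inv_smul_sub_sub_sq
    (fun h => hconv.hasGradientAt_eq_of_inner_sub_nonpos (hgrad y) (hgrad z) h.le)
    hγ₀.ne'] at hyoung
  have hscaled := mul_le_mul_of_nonneg_left hyoung hγ₁.le
  have hid : γ₁ * ((1 - γ₀ * lEst f' y z * (2 - γ₀ * cEst f' y z)) / γ₀ ^ 2 * ‖y - z‖ ^ 2
        / (2 * (ε / γ₀)) + ε / γ₀ / 2 * ‖z - w‖ ^ 2)
      = γ₁ / γ₀ * ((1 - γ₀ * lEst f' y z * (2 - γ₀ * cEst f' y z)) / (2 * ε)) * ‖y - z‖ ^ 2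
        + ε * (γ₁ / γ₀) / 2 * ‖z - w‖ ^ 2 := by
    field_simp
  linarith

end ProximalGradient

theorem PGM_parametric_descent_inequality_general {n : ℕ}
    (f : En n → ℝ) (f' : En n → En n) (g : En n → EReal)
    (hconv : ConvexOn ℝ Set.univ f)
    (hgrad : ∀ z, HasGradientAt f (f' z) z)
    (hg : ProperLscConvex g)
    (γ : ℕ → ℝ) (hγpos : ∀ k, 0 < γ k)
    (x : ℕ → En n)
    (hstep : ∀ k, IsProx (γ (k+1)) g (x k - γ (k+1) • f' (x k)) (x (k+1)))
    (xs : En n) (hxs : ∀ w, (f xs : EReal) + g xs ≤ (f w : EReal) + g w)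
    (k : ℕ) (hk : 1 ≤ k)
    (ε θ : ℝ) (hε : 0 < ε) (hθ : 0 ≤ θ) :
    ((1/2 * ‖x (k+1) - xs‖ ^ 2
        + (1 - ε * (γ (k+1) / γ k)) / 2 * ‖x k - x (k+1)‖ ^ 2 : ℝ) : EReal)
        + ((γ (k+1) * (1 + θ) : ℝ) : EReal)
            * (((f (x k) : EReal) + g (x k)) - ((f xs : EReal) + g xs))
      ≤ ((1/2 * ‖x k - xs‖ ^ 2
            + (γ (k+1) / γ k)
              * ((1 - γ k * lEst f' (x (k-1)) (x k) * (2 - γ k * cEst f' (x (k-1)) (x k)))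
                    / (2 * ε)
                  - θ * (1 - γ k * lEst f' (x (k-1)) (x k)))
              * ‖x (k-1) - x k‖ ^ 2 : ℝ) : EReal)
        + ((θ * γ (k+1) : ℝ) : EReal)
            * (((f (x (k-1)) : EReal) + g (x (k-1))) - ((f xs : EReal) + g xs)) := by
  obtain ⟨hg_ne_bot, hg_proper, -, hg_convex⟩ := hg
  obtain ⟨k, rfl⟩ : ∃ j, k = j + 1 := ⟨k - 1, by omega⟩
  simp only [Nat.add_sub_cancel]
  have hfinite : ∀ a, g a ≠ ⊤ → ∃ r : ℝ, g a = r :=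
    fun a ha => ⟨_, (EReal.coe_toReal ha (hg_ne_bot a)).symm⟩
  obtain ⟨Gz, hGz⟩ := hfinite _ ((hstep k).ne_top hg_proper)
  obtain ⟨Gw, hGw⟩ := hfinite _ ((hstep (k + 1)).ne_top hg_proper)
  obtain ⟨Gs, hGs⟩ := hfinite xs
    (EReal.ne_top_of_coe_add_le (hxs (x (k + 1))) ((hstep k).ne_top hg_proper))
  have hdescent := prox_grad_descent hconv hgrad hg_convex (hγpos (k + 1)) (hγpos (k + 1 + 1))
    hε (hstep k) (hstep (k + 1)) hGz hGw hGs
  rw [hGz, hGs]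
  -- `(0 : EReal) * ⊤ = 0`: for `θ = 0` an infinite `g (x (k-1))` does no harm
  rcases eq_or_ne (g (x k)) ⊤ with hy | hy
  · rcases hθ.eq_or_lt with rfl | hθ
    · simp only [zero_mul, EReal.coe_zero, sub_zero, add_zero]
      norm_cast
      linarith
    · rw [hy, EReal.coe_add_top, ← EReal.coe_add (f xs), EReal.top_sub_coe,
        EReal.coe_mul_top_of_pos (mul_pos hθ (hγpos _)), EReal.coe_add_top]
      exact le_top
  · obtain ⟨Gy, hGy⟩ := hfinite _ hy
    have hdecrease := prox_grad_sufficient_decrease hconv hgrad hg_convex (hγpos (k + 1))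
      (hstep k) hGy hGz
    rw [hGy]
    norm_cast
    have := mul_le_mul_of_nonneg_left hdecrease (mul_nonneg hθ (hγpos (k + 1 + 1)).le)
    linear_combination hdescent + this

/-- parametric descent inequality for the proximal gradient method
(inequality (eq:PG:descentdelta)), with free parameters `ε_{k+1} > 0` and `θ_{k+1} ≥ 0`. -/
theorem PGM_parametric_descent_inequality {n : ℕ}
    (f : En n → ℝ) (f' : En n → En n) (g : En n → EReal)
    (hconv : ConvexOn ℝ Set.univ f)
    (hgrad : ∀ z, HasGradientAt f (f' z) z)
    (hlip : LocallyLipschitz f')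
    (hg : ProperLscConvex g)
    (γ : ℕ → ℝ) (hγpos : ∀ k, 0 < γ k)
    (x : ℕ → En n)
    (hstep : ∀ k, IsProx (γ (k+1)) g (x k - γ (k+1) • f' (x k)) (x (k+1)))
    (xs : En n) (hxs : ∀ w, (f xs : EReal) + g xs ≤ (f w : EReal) + g w)
    (k : ℕ) (hk : 1 ≤ k)
    (ε θ : ℝ) (hε : 0 < ε) (hθ : 0 ≤ θ) :
    ((1/2 * ‖x (k+1) - xs‖ ^ 2
        + (1 - ε * (γ (k+1) / γ k)) / 2 * ‖x k - x (k+1)‖ ^ 2 : ℝ) : EReal)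
        + ((γ (k+1) * (1 + θ) : ℝ) : EReal)
            * (((f (x k) : EReal) + g (x k)) - ((f xs : EReal) + g xs))
      ≤ ((1/2 * ‖x k - xs‖ ^ 2
            + (γ (k+1) / γ k)
              * ((1 - γ k * lEst f' (x (k-1)) (x k) * (2 - γ k * cEst f' (x (k-1)) (x k)))
                    / (2 * ε)
                  - θ * (1 - γ k * lEst f' (x (k-1)) (x k)))
              * ‖x (k-1) - x k‖ ^ 2 : ℝ) : EReal)
        + ((θ * γ (k+1) : ℝ) : EReal)
            * (((f (x (k-1)) : EReal) + g (x (k-1))) - ((f xs : EReal) + g xs)) :=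
  PGM_parametric_descent_inequality_general f f' g hconv hgrad hg γ hγpos x hstep xs hxs k hk ε θ hε
    hθ
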